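/- If w : [t₀, ∞) → ℝⁿ is continuous with w(t₀) = 0 and q(s) := w(s)/√(s - t₀) satisfies q(s) → 0 as s → t₀⁺ and ‖q(s)‖ ≤ C for all s, then t ↦ ∫_{t₀}^t w(s)/√(t - s) ds is differentiable at t = t₀ with derivative 0. -/

import Mathlib

open MeasureTheory intervalIntegral Set Filter Topology

lemma sqrt_inv_eq_rpow (x : ℝ) : (Real.sqrt x)⁻¹ = x ^ (-(1/2) : ℝ) := by
  rcases le_or_gt 0 x with hx | hx
  · rw [Real.rpow_neg hx, Real.sqrt_eq_rpow]
  · rw [Real.sqrt_eq_zero'.mpr hx.le, inv_zero, Real.rpow_def_of_neg hx]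
    have : Real.cos (-(1/2) * Real.pi) = 0 := by
      rw [neg_mul, Real.cos_neg]
      rw [show (1/2 : ℝ) * Real.pi = Real.pi / 2 by ring, Real.cos_pi_div_two]
    rw [this, mul_zero]

lemma sqrt_inv_intervalIntegrable (a b : ℝ) :
    IntervalIntegrable (fun s => (Real.sqrt (b - s))⁻¹) volume a b := by
  have h : (fun s => (Real.sqrt (b - s))⁻¹)
      = (fun s => ((fun x : ℝ => x ^ (-(1/2) : ℝ)) (b - s))) := by
    funext s; exact sqrt_inv_eq_rpow _
  rw [h]
  have := (intervalIntegrable_rpow' (a := b - a) (b := b - b)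
      (r := -(1/2)) (by norm_num)).comp_sub_left b
  simpa using this

lemma sqrt_inv_integral (a b : ℝ) (hab : a ≤ b) :
    ∫ s in a..b, (Real.sqrt (b - s))⁻¹ = 2 * Real.sqrt (b - a) := by
  have h : (∫ s in a..b, (Real.sqrt (b - s))⁻¹)
      = ∫ s in a..b, ((fun x : ℝ => x ^ (-(1/2) : ℝ)) (b - s)) := by
    congr 1; funext s; exact sqrt_inv_eq_rpow _
  rw [h, intervalIntegral.integral_comp_sub_left (fun x : ℝ => x ^ (-(1/2) : ℝ)) b, sub_self]
  rw [integral_rpow (Or.inl (by norm_num))]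
  rw [Real.sqrt_eq_rpow]
  rw [Real.zero_rpow (by norm_num)]
  norm_num
  ring

theorem basset_integral_differentiable_at_t0
    (n : ℕ) (t₀ C : ℝ) (hC : 0 < C)
    (w : ℝ → EuclideanSpace ℝ (Fin n))
    (hw : ContinuousOn w (Ici t₀))
    (hw0 : w t₀ = 0)
    (hbound : ∀ s, t₀ < s → ‖(Real.sqrt (s - t₀))⁻¹ • w s‖ ≤ C)
    (hlim : Tendsto (fun s => (Real.sqrt (s - t₀))⁻¹ • w s) (𝓝[>] t₀) (𝓝 0)) :
    Tendsto (fun t => (t - t₀)⁻¹ • ∫ s in t₀..t, (Real.sqrt (t - s))⁻¹ • w s)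
      (𝓝[>] t₀) (𝓝 0) := by
  rw [NormedAddCommGroup.tendsto_nhds_zero]
  intro ε hε
  have hε3 : (0:ℝ) < ε / 3 := by positivity
  rw [NormedAddCommGroup.tendsto_nhds_zero] at hlim
  have h1 := hlim (ε/3) hε3
  rcases mem_nhdsGT_iff_exists_Ioo_subset.mp h1 with ⟨u, hu, hsub⟩
  have hu' : t₀ < u := hu
  filter_upwards [Ioo_mem_nhdsGT_of_mem (left_mem_Ico.mpr hu')] with t ht
  obtain ⟨ht₀, htu⟩ := ht
  set T := t - t₀ with hT
  have hT0 : 0 < T := by simp [hT, ht₀]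
  -- pointwise bound on Ioc t₀ t
  have hptw : ∀ s ∈ uIoc t₀ t, ‖(Real.sqrt (t - s))⁻¹ • w s‖
      ≤ (ε/3) * Real.sqrt T * (Real.sqrt (t - s))⁻¹ := by
    intro s hs
    rw [uIoc_of_le ht₀.le] at hs
    obtain ⟨hs1, hs2⟩ := hs
    have hwseq : w s = (Real.sqrt (s - t₀)) • ((Real.sqrt (s - t₀))⁻¹ • w s) := by
      rw [smul_smul, mul_inv_cancel₀ (ne_of_gt (Real.sqrt_pos.mpr (by linarith))), one_smul]
    have hqs : ‖(Real.sqrt (s - t₀))⁻¹ • w s‖ ≤ ε/3 :=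
      (hsub ⟨hs1, lt_of_le_of_lt hs2 htu⟩).le
    calc ‖(Real.sqrt (t - s))⁻¹ • w s‖
        = (Real.sqrt (t - s))⁻¹ * ‖w s‖ := by
          rw [norm_smul, Real.norm_eq_abs, abs_of_nonneg (by positivity)]
      _ = (Real.sqrt (t - s))⁻¹ * (Real.sqrt (s - t₀) * ‖(Real.sqrt (s - t₀))⁻¹ • w s‖) := by
          conv_lhs => rw [hwseq]
          rw [norm_smul, Real.norm_eq_abs, abs_of_nonneg (Real.sqrt_nonneg _)]
      _ ≤ (Real.sqrt (t - s))⁻¹ * (Real.sqrt T * (ε/3)) := by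
          apply mul_le_mul_of_nonneg_left _ (by positivity)
          apply mul_le_mul (Real.sqrt_le_sqrt (by simp [hT]; linarith)) hqs (norm_nonneg _)
            (Real.sqrt_nonneg _)
      _ = (ε/3) * Real.sqrt T * (Real.sqrt (t - s))⁻¹ := by ring
  have hgint : IntervalIntegrable
      (fun s => (ε/3) * Real.sqrt T * (Real.sqrt (t - s))⁻¹) volume t₀ t :=
    (sqrt_inv_intervalIntegrable t₀ t).const_mul _
  have hbnd : ‖∫ s in t₀..t, (Real.sqrt (t - s))⁻¹ • w s‖
      ≤ |∫ s in t₀..t, (ε/3) * Real.sqrt T * (Real.sqrt (t - s))⁻¹| := by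
    apply intervalIntegral.norm_integral_le_abs_of_norm_le _ hgint
    exact (ae_restrict_iff' measurableSet_uIoc).mpr (ae_of_all _ hptw)
  have hval : (∫ s in t₀..t, (ε/3) * Real.sqrt T * (Real.sqrt (t - s))⁻¹)
      = (ε/3) * Real.sqrt T * (2 * Real.sqrt T) := by
    rw [intervalIntegral.integral_const_mul, sqrt_inv_integral t₀ t ht₀.le]
  have hsq : Real.sqrt T * Real.sqrt T = T := Real.mul_self_sqrt hT0.le
  have hfinal : ‖(t - t₀)⁻¹ • ∫ s in t₀..t, (Real.sqrt (t - s))⁻¹ • w s‖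
      ≤ 2 * (ε/3) := by
    rw [norm_smul, Real.norm_eq_abs, abs_of_nonneg (by positivity : (0:ℝ) ≤ (t - t₀)⁻¹)]
    rw [← hT]
    calc T⁻¹ * ‖∫ s in t₀..t, (Real.sqrt (t - s))⁻¹ • w s‖
        ≤ T⁻¹ * |(ε/3) * Real.sqrt T * (2 * Real.sqrt T)| := by
          apply mul_le_mul_of_nonneg_left _ (by positivity)
          rw [← hval]; exact hbnd
      _ = T⁻¹ * (2 * (ε/3) * T) := by
          rw [abs_of_nonneg (by positivity), show (ε/3) * Real.sqrt T * (2*Real.sqrt T) = 2*(ε/3)*(Real.sqrt T * Real.sqrt T) by ring, hsq]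
      _ = 2 * (ε/3) := by field_simp
  linarith [hfinal]
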